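/- arXiv:2107.05261 — 3 statements merged into one kernel-verified Lean document; each statement's English description precedes it below -/
import Mathlib

section
/- In a summable category, if f0, f1, f2 ∈ L(X,Y) are such that (f0,f1) is summable and (f0+f1, f2) is summable, then (f1,f2) is summable, (f0, f1+f2) is summable, and (f0+f1)+f2 = f0+(f1+f2). -/
/-!
Put `f0, f1, f2` into the 2 × 2 array with rows `(f0, f1)` and `(0, f2)`: its row sums
`s` and `f2` are summable, so (S-wit) makes the array itself a witness `W : X ⟶ S(SY)`.
Naturality of `σ` shows that the column sums `f0 + 0 = f0` and `f1 + f2` are summable, with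
the same total `t` as the row sums.
-/

open CategoryTheory Limits

universe v u

/-- A pre-summability structure on a category enriched over pointed sets
(rendered via zero morphisms): a functor S preserving zero morphisms with
three natural transformations π0, π1, σ to the identity such that π0, π1
are jointly monic. -/
structure PreSummability (L : Type u) [Category.{v} L] [HasZeroMorphisms L] where
  S : L ⥤ L
  p0 : S ⟶ 𝟭 L
  p1 : S ⟶ 𝟭 L
  sg : S ⟶ 𝟭 L
  S_zero : ∀ (X Y : L), S.map (0 : X ⟶ Y) = 0
  jointly_monic : ∀ {X Y : L} (f g : X ⟶ S.obj Y),
    f ≫ p0.app Y = g ≫ p0.app Y → f ≫ p1.app Y = g ≫ p1.app Y → f = g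

variable {L : Type u} [Category.{v} L] [HasZeroMorphisms L]

/-- `w` is the witness of summability of `f0` and `f1`. -/
def PreSummability.IsWitness (P : PreSummability L) {X Y : L}
    (f0 f1 : X ⟶ Y) (w : X ⟶ P.S.obj Y) : Prop :=
  w ≫ P.p0.app Y = f0 ∧ w ≫ P.p1.app Y = f1

/-- `f0` and `f1` are summable. -/
def PreSummability.Summable (P : PreSummability L) {X Y : L} (f0 f1 : X ⟶ Y) : Prop :=
  ∃ w, P.IsWitness f0 f1 w

/-- `s` is the sum `f0 + f1` of the summable pair `(f0, f1)`. -/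
def PreSummability.IsSum (P : PreSummability L) {X Y : L} (f0 f1 s : X ⟶ Y) : Prop :=
  ∃ w, P.IsWitness f0 f1 w ∧ w ≫ P.sg.app Y = s

/-- A summability structure: a pre-summability structure satisfying the axioms
(S-com), (S-zero), (S-wit) and (S-ass). In (S-ass) the flip `c` is
characterized by the equations π_i ∘ π_j ∘ c = π_j ∘ π_i. -/
structure SummabilityStructure (L : Type u) [Category.{v} L] [HasZeroMorphisms L]
    extends PreSummability L where
  ax_com : ∀ X : L, ∃ w : S.obj X ⟶ S.obj X,
    toPreSummability.IsWitness (p1.app X) (p0.app X) w ∧ w ≫ sg.app X = sg.app X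
  ax_zero : ∀ {X Y : L} (f : X ⟶ Y), toPreSummability.IsSum f 0 f
  ax_wit : ∀ {X Y : L} (w0 w1 : X ⟶ S.obj Y),
    toPreSummability.Summable (w0 ≫ sg.app Y) (w1 ≫ sg.app Y) →
    toPreSummability.Summable w0 w1
  ax_ass : ∀ (X : L) (c : S.obj (S.obj X) ⟶ S.obj (S.obj X)),
    (c ≫ p0.app (S.obj X) ≫ p0.app X = p0.app (S.obj X) ≫ p0.app X) →
    (c ≫ p0.app (S.obj X) ≫ p1.app X = p1.app (S.obj X) ≫ p0.app X) →
    (c ≫ p1.app (S.obj X) ≫ p0.app X = p0.app (S.obj X) ≫ p1.app X) →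
    (c ≫ p1.app (S.obj X) ≫ p1.app X = p1.app (S.obj X) ≫ p1.app X) →
    c ≫ S.map (sg.app X) = sg.app (S.obj X)

namespace PreSummability

variable {P : PreSummability L} {X Y Z : L}

theorem map_comp_app (α : P.S ⟶ 𝟭 L) (f : X ⟶ Y) :
    P.S.map f ≫ α.app Y = α.app X ≫ f :=
  α.naturality f

theorem IsWitness.unique {f0 f1 : X ⟶ Y} {w w' : X ⟶ P.S.obj Y}
    (hw : P.IsWitness f0 f1 w) (hw' : P.IsWitness f0 f1 w') : w = w' :=
  P.jointly_monic w w' (hw.1.trans hw'.1.symm) (hw.2.trans hw'.2.symm)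

theorem IsWitness.comp_map {w0 w1 : X ⟶ Y} {W : X ⟶ P.S.obj Y}
    (hW : P.IsWitness w0 w1 W) (g : Y ⟶ Z) :
    P.IsWitness (w0 ≫ g) (w1 ≫ g) (W ≫ P.S.map g) := by
  constructor
  · rw [Category.assoc, map_comp_app, ← Category.assoc, hW.1]
  · rw [Category.assoc, map_comp_app, ← Category.assoc, hW.2]

/-- Medial law: for `W` read as a 2 × 2 array with rows `W ≫ π_i`, the column sums are
summable and add up to the sum of the row sums. -/
theorem isSum_medial (W : X ⟶ P.S.obj (P.S.obj Y)) :
    P.IsSum (W ≫ P.S.map (P.p0.app Y) ≫ P.sg.app Y) (W ≫ P.S.map (P.p1.app Y) ≫ P.sg.app Y)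
      (W ≫ P.S.map (P.sg.app Y) ≫ P.sg.app Y) := by
  refine ⟨W ≫ P.sg.app (P.S.obj Y), ⟨?_, ?_⟩, ?_⟩ <;>
    simp only [Category.assoc, Functor.id_obj, map_comp_app]

end PreSummability

namespace SummabilityStructure

variable (Q : SummabilityStructure L) {X Y : L}

theorem isSum_symm {f0 f1 s : X ⟶ Y} (h : Q.IsSum f0 f1 s) : Q.IsSum f1 f0 s := by
  obtain ⟨w, ⟨hw0, hw1⟩, hws⟩ := h
  obtain ⟨c, ⟨hc0, hc1⟩, hcs⟩ := Q.ax_com Y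
  simp only [Functor.id_obj] at hc0 hc1
  refine ⟨w ≫ c, ⟨?_, ?_⟩, ?_⟩
  · rw [Category.assoc, hc0, hw1]
  · rw [Category.assoc, hc1, hw0]
  · rw [Category.assoc, hcs, hws]

theorem sum_eq_of_isWitness_zero_right {f : X ⟶ Y} {w : X ⟶ Q.S.obj Y}
    (hw : Q.IsWitness f 0 w) : w ≫ Q.sg.app Y = f := by
  obtain ⟨w', hw', hw's⟩ := Q.ax_zero f
  rw [hw.unique hw', hw's]

end SummabilityStructure

/-- In a summable category: if `(f0,f1)` is summable with sum `s` and `(s,f2)`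
is summable with sum `t`, then `(f1,f2)` is summable with a sum `u`,
`(f0,u)` is summable, and `(f0+f1)+f2 = f0+(f1+f2)`. -/
theorem stmt5 (Q : SummabilityStructure L) {X Y : L}
    (f0 f1 f2 s t : X ⟶ Y)
    (h01 : Q.toPreSummability.IsSum f0 f1 s)
    (h : Q.toPreSummability.IsSum s f2 t) :
    ∃ u : X ⟶ Y,
      Q.toPreSummability.IsSum f1 f2 u ∧
      Q.toPreSummability.IsSum f0 u t := by
  obtain ⟨w01, hw01, rfl⟩ := h01
  obtain ⟨w, hw, rfl⟩ := h
  obtain ⟨w2, hw2, hw2s⟩ := Q.isSum_symm (Q.ax_zero f2)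
  have hsum : Q.IsWitness (w01 ≫ Q.sg.app Y) (w2 ≫ Q.sg.app Y) w := hw2s ▸ hw
  obtain ⟨W, hW⟩ := Q.ax_wit w01 w2 ⟨w, hsum⟩
  have hcol0 : W ≫ Q.S.map (Q.p0.app Y) ≫ Q.sg.app Y = f0 := by
    rw [← Category.assoc]
    apply Q.sum_eq_of_isWitness_zero_right
    simpa only [hw01.1, hw2.1] using hW.comp_map (Q.p0.app Y)
  have hcol1 : Q.IsWitness f1 f2 (W ≫ Q.S.map (Q.p1.app Y)) := by
    simpa only [hw01.2, hw2.2] using hW.comp_map (Q.p1.app Y)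
  have hrowSums : W ≫ Q.S.map (Q.sg.app Y) = w := (hW.comp_map (Q.sg.app Y)).unique hsum
  refine ⟨_, ⟨_, hcol1, rfl⟩, ?_⟩
  simpa only [hcol0, ← Category.assoc, hrowSums] using PreSummability.isSum_medial W
end

section
/- In a summable symmetric monoidal category, the strength θ turns (S, ι0, τ) into a commutative strong monad: in particular τ ∘ (S θ') ∘ θ_{S X0, X1} = τ ∘ (S θ) ∘ θ'_{X0, S X1}, where θ' is the symmetric strength, and in fact (S θ')∘θ_{S X0,X1} = c ∘ (S θ)∘θ'_{X0,S X1} with c the flip. -/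
open CategoryTheory Limits

universe v u

variable {L : Type u} [Category.{v} L] [HasZeroMorphisms L]

open MonoidalCategory

namespace PreSummability

variable (P : PreSummability L)

structure IsFlip {X : L} (c : P.S.obj (P.S.obj X) ⟶ P.S.obj (P.S.obj X)) : Prop where
  p00 : c ≫ P.p0.app (P.S.obj X) ≫ P.p0.app X = P.p0.app (P.S.obj X) ≫ P.p0.app X
  p01 : c ≫ P.p0.app (P.S.obj X) ≫ P.p1.app X = P.p1.app (P.S.obj X) ≫ P.p0.app X
  p10 : c ≫ P.p1.app (P.S.obj X) ≫ P.p0.app X = P.p0.app (P.S.obj X) ≫ P.p1.app X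
  p11 : c ≫ P.p1.app (P.S.obj X) ≫ P.p1.app X = P.p1.app (P.S.obj X) ≫ P.p1.app X

variable {P}

theorem hom_ext₂ {X Y : L} {f g : X ⟶ P.S.obj (P.S.obj Y)}
    (h00 : f ≫ P.p0.app _ ≫ P.p0.app Y = g ≫ P.p0.app _ ≫ P.p0.app Y)
    (h01 : f ≫ P.p0.app _ ≫ P.p1.app Y = g ≫ P.p0.app _ ≫ P.p1.app Y)
    (h10 : f ≫ P.p1.app _ ≫ P.p0.app Y = g ≫ P.p1.app _ ≫ P.p0.app Y)
    (h11 : f ≫ P.p1.app _ ≫ P.p1.app Y = g ≫ P.p1.app _ ≫ P.p1.app Y) : f = g := by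
  simp only [← Category.assoc] at h00 h01 h10 h11
  exact P.jointly_monic _ _ (P.jointly_monic _ _ h00 h01) (P.jointly_monic _ _ h10 h11)

/-- The `(i, j)` double projections of the two sides are `_ ◁ π_i ≫ π_j ▷ _` and
`π_j ▷ _ ≫ _ ◁ π_i`, equal by whisker exchange. -/
theorem strength_comm [MonoidalCategory L] {X0 X1 : L}
    {θ0 : X0 ⊗ P.S.obj X1 ⟶ P.S.obj (X0 ⊗ X1)} {θ'0 : P.S.obj X0 ⊗ X1 ⟶ P.S.obj (X0 ⊗ X1)}
    {θA : P.S.obj X0 ⊗ P.S.obj X1 ⟶ P.S.obj (P.S.obj X0 ⊗ X1)}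
    {θ'B : P.S.obj X0 ⊗ P.S.obj X1 ⟶ P.S.obj (X0 ⊗ P.S.obj X1)}
    {c : P.S.obj (P.S.obj (X0 ⊗ X1)) ⟶ P.S.obj (P.S.obj (X0 ⊗ X1))}
    (hθ0 : P.IsWitness (X0 ◁ P.p0.app X1) (X0 ◁ P.p1.app X1) θ0)
    (hθ'0 : P.IsWitness (P.p0.app X0 ▷ X1) (P.p1.app X0 ▷ X1) θ'0)
    (hθA : P.IsWitness (P.S.obj X0 ◁ P.p0.app X1) (P.S.obj X0 ◁ P.p1.app X1) θA)
    (hθ'B : P.IsWitness (P.p0.app X0 ▷ P.S.obj X1) (P.p1.app X0 ▷ P.S.obj X1) θ'B)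
    (hc : P.IsFlip c) :
    θA ≫ P.S.map θ'0 = θ'B ≫ P.S.map θ0 ≫ c := by
  obtain ⟨hA0, hA1⟩ := hθA
  obtain ⟨hB0, hB1⟩ := hθ'B
  obtain ⟨h0, h1⟩ := hθ0
  obtain ⟨h'0, h'1⟩ := hθ'0
  simp only [Functor.id_obj] at hA0 hA1 hB0 hB1 h0 h1 h'0 h'1
  apply hom_ext₂ <;>
    simp [reassoc_of% hA0, reassoc_of% hA1, reassoc_of% hB0, reassoc_of% hB1, hc.p00, hc.p01,
      hc.p10, hc.p11, h0, h1, h'0, h'1, whisker_exchange]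

end PreSummability

namespace SummabilityStructure

variable (Q : SummabilityStructure L)

/-- The flip fixes the multiplication `τ`: the second component of `τ` is a sum, and sums are
commutative by (S-com). -/
theorem flip_comp_eq_self {X : L} {c τ : Q.S.obj (Q.S.obj X) ⟶ _} (hc : Q.IsFlip c)
    (hτ0 : τ ≫ Q.p0.app X = Q.p0.app (Q.S.obj X) ≫ Q.p0.app X)
    (hτ1 : Q.IsSum (Q.p1.app (Q.S.obj X) ≫ Q.p0.app X) (Q.p0.app (Q.S.obj X) ≫ Q.p1.app X)
      (τ ≫ Q.p1.app X)) :
    c ≫ τ = τ := by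
  obtain ⟨w, ⟨hw0, hw1⟩, hw⟩ := hτ1
  obtain ⟨swap, ⟨hswap0, hswap1⟩, hswap⟩ := Q.ax_com X
  simp only [Functor.id_obj] at hw0 hw1 hw hswap0 hswap1 hswap
  have hcw : c ≫ w = w ≫ swap :=
    Q.jointly_monic _ _ (by simp [hw0, hw1, hswap0, hc.p10]) (by simp [hw0, hw1, hswap1, hc.p01])
  refine Q.jointly_monic _ _ (by simp [hτ0, hc.p00]) ?_
  rw [Category.assoc, ← hw, reassoc_of% hcw, hswap]

end SummabilityStructure

theorem stmt11_general {L : Type u} [Category.{v} L] [MonoidalCategory L] [HasZeroMorphisms L]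
    (Q : SummabilityStructure L)
    {X0 X1 : L}
    (θ0 : X0 ⊗ Q.S.obj X1 ⟶ Q.S.obj (X0 ⊗ X1))
    (hθ0 : Q.toPreSummability.IsWitness (X0 ◁ Q.p0.app X1) (X0 ◁ Q.p1.app X1) θ0)
    (θ'0 : Q.S.obj X0 ⊗ X1 ⟶ Q.S.obj (X0 ⊗ X1))
    (hθ'0 : Q.toPreSummability.IsWitness (Q.p0.app X0 ▷ X1) (Q.p1.app X0 ▷ X1) θ'0)
    (θA : Q.S.obj X0 ⊗ Q.S.obj X1 ⟶ Q.S.obj (Q.S.obj X0 ⊗ X1))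
    (hθA : Q.toPreSummability.IsWitness
      (Q.S.obj X0 ◁ Q.p0.app X1) (Q.S.obj X0 ◁ Q.p1.app X1) θA)
    (θ'B : Q.S.obj X0 ⊗ Q.S.obj X1 ⟶ Q.S.obj (X0 ⊗ Q.S.obj X1))
    (hθ'B : Q.toPreSummability.IsWitness
      (Q.p0.app X0 ▷ Q.S.obj X1) (Q.p1.app X0 ▷ Q.S.obj X1) θ'B)
    (c : Q.S.obj (Q.S.obj (X0 ⊗ X1)) ⟶ Q.S.obj (Q.S.obj (X0 ⊗ X1)))
    (hc00 : c ≫ Q.p0.app (Q.S.obj (X0 ⊗ X1)) ≫ Q.p0.app (X0 ⊗ X1) =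
      Q.p0.app (Q.S.obj (X0 ⊗ X1)) ≫ Q.p0.app (X0 ⊗ X1))
    (hc01 : c ≫ Q.p0.app (Q.S.obj (X0 ⊗ X1)) ≫ Q.p1.app (X0 ⊗ X1) =
      Q.p1.app (Q.S.obj (X0 ⊗ X1)) ≫ Q.p0.app (X0 ⊗ X1))
    (hc10 : c ≫ Q.p1.app (Q.S.obj (X0 ⊗ X1)) ≫ Q.p0.app (X0 ⊗ X1) =
      Q.p0.app (Q.S.obj (X0 ⊗ X1)) ≫ Q.p1.app (X0 ⊗ X1))
    (hc11 : c ≫ Q.p1.app (Q.S.obj (X0 ⊗ X1)) ≫ Q.p1.app (X0 ⊗ X1) =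
      Q.p1.app (Q.S.obj (X0 ⊗ X1)) ≫ Q.p1.app (X0 ⊗ X1))
    (τ : Q.S.obj (Q.S.obj (X0 ⊗ X1)) ⟶ Q.S.obj (X0 ⊗ X1))
    (hτ0 : τ ≫ Q.p0.app (X0 ⊗ X1) =
      Q.p0.app (Q.S.obj (X0 ⊗ X1)) ≫ Q.p0.app (X0 ⊗ X1))
    (hτ1 : Q.toPreSummability.IsSum
      (Q.p1.app (Q.S.obj (X0 ⊗ X1)) ≫ Q.p0.app (X0 ⊗ X1))
      (Q.p0.app (Q.S.obj (X0 ⊗ X1)) ≫ Q.p1.app (X0 ⊗ X1))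
      (τ ≫ Q.p1.app (X0 ⊗ X1))) :
    θA ≫ Q.S.map θ'0 = θ'B ≫ Q.S.map θ0 ≫ c ∧
    θA ≫ Q.S.map θ'0 ≫ τ = θ'B ≫ Q.S.map θ0 ≫ τ := by
  have hc : Q.IsFlip c := ⟨hc00, hc01, hc10, hc11⟩
  have hcomm := PreSummability.strength_comm hθ0 hθ'0 hθA hθ'B hc
  refine ⟨hcomm, ?_⟩
  rw [reassoc_of% hcomm, Q.flip_comp_eq_self hc hτ0 hτ1]

/-- In a summable SMC the strength θ makes (S, ι0, τ) a commutative strong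
monad: (S θ')∘θ_{S X0,X1} = c ∘ (S θ)∘θ'_{X0,S X1} (with c the flip), and
hence τ ∘ (S θ') ∘ θ_{S X0,X1} = τ ∘ (S θ) ∘ θ'_{X0,S X1}. All strengths are
given by their witness characterizations, the flip and τ by their defining
equations. -/
theorem stmt11 {L : Type u} [Category.{v} L] [MonoidalCategory L] [HasZeroMorphisms L]
    (Q : SummabilityStructure L)
    (hdist : ∀ {X0 Y0 X1 Y1 : L} (f00 f01 s : X0 ⟶ Y0) (f1 : X1 ⟶ Y1),
      Q.toPreSummability.IsSum f00 f01 s →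
      Q.toPreSummability.IsSum (f00 ⊗ₘ f1) (f01 ⊗ₘ f1) (s ⊗ₘ f1))
    {X0 X1 : L}
    (θ0 : X0 ⊗ Q.S.obj X1 ⟶ Q.S.obj (X0 ⊗ X1))
    (hθ0 : Q.toPreSummability.IsWitness (X0 ◁ Q.p0.app X1) (X0 ◁ Q.p1.app X1) θ0)
    (θ'0 : Q.S.obj X0 ⊗ X1 ⟶ Q.S.obj (X0 ⊗ X1))
    (hθ'0 : Q.toPreSummability.IsWitness (Q.p0.app X0 ▷ X1) (Q.p1.app X0 ▷ X1) θ'0)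
    (θA : Q.S.obj X0 ⊗ Q.S.obj X1 ⟶ Q.S.obj (Q.S.obj X0 ⊗ X1))
    (hθA : Q.toPreSummability.IsWitness
      (Q.S.obj X0 ◁ Q.p0.app X1) (Q.S.obj X0 ◁ Q.p1.app X1) θA)
    (θ'B : Q.S.obj X0 ⊗ Q.S.obj X1 ⟶ Q.S.obj (X0 ⊗ Q.S.obj X1))
    (hθ'B : Q.toPreSummability.IsWitness
      (Q.p0.app X0 ▷ Q.S.obj X1) (Q.p1.app X0 ▷ Q.S.obj X1) θ'B)
    (c : Q.S.obj (Q.S.obj (X0 ⊗ X1)) ⟶ Q.S.obj (Q.S.obj (X0 ⊗ X1)))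
    (hc00 : c ≫ Q.p0.app (Q.S.obj (X0 ⊗ X1)) ≫ Q.p0.app (X0 ⊗ X1) =
      Q.p0.app (Q.S.obj (X0 ⊗ X1)) ≫ Q.p0.app (X0 ⊗ X1))
    (hc01 : c ≫ Q.p0.app (Q.S.obj (X0 ⊗ X1)) ≫ Q.p1.app (X0 ⊗ X1) =
      Q.p1.app (Q.S.obj (X0 ⊗ X1)) ≫ Q.p0.app (X0 ⊗ X1))
    (hc10 : c ≫ Q.p1.app (Q.S.obj (X0 ⊗ X1)) ≫ Q.p0.app (X0 ⊗ X1) =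
      Q.p0.app (Q.S.obj (X0 ⊗ X1)) ≫ Q.p1.app (X0 ⊗ X1))
    (hc11 : c ≫ Q.p1.app (Q.S.obj (X0 ⊗ X1)) ≫ Q.p1.app (X0 ⊗ X1) =
      Q.p1.app (Q.S.obj (X0 ⊗ X1)) ≫ Q.p1.app (X0 ⊗ X1))
    (τ : Q.S.obj (Q.S.obj (X0 ⊗ X1)) ⟶ Q.S.obj (X0 ⊗ X1))
    (hτ0 : τ ≫ Q.p0.app (X0 ⊗ X1) =
      Q.p0.app (Q.S.obj (X0 ⊗ X1)) ≫ Q.p0.app (X0 ⊗ X1))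
    (hτ1 : Q.toPreSummability.IsSum
      (Q.p1.app (Q.S.obj (X0 ⊗ X1)) ≫ Q.p0.app (X0 ⊗ X1))
      (Q.p0.app (Q.S.obj (X0 ⊗ X1)) ≫ Q.p1.app (X0 ⊗ X1))
      (τ ≫ Q.p1.app (X0 ⊗ X1))) :
    θA ≫ Q.S.map θ'0 = θ'B ≫ Q.S.map θ0 ≫ c ∧
    θA ≫ Q.S.map θ'0 ≫ τ = θ'B ≫ Q.S.map θ0 ≫ τ :=
  stmt11_general Q θ0 hθ0 θ'0 hθ'0 θA hθA θ'B hθ'B c hc00 hc01 hc10 hc11 τ hτ0 hτ1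
end

section
/- In a Lafont SMC, for any commutative comonoid C, the counit w_C and the comultiplication d_C are coalgebra morphisms: !w_C ∘ δ_C = m⁰ ∘ w_C and !d_C ∘ δ_C = m² ∘ (δ_C ⊗ δ_C) ∘ d_C, where (m⁰, m²) is the lax monoidality of !. -/
/-!
By cofreeness, a comonoid morphism from a commutative comonoid into `!X` is determined by its
composite with `eps X`. Each side of both equations is a composite of comonoid morphisms: `δ`,
`!w_C`, `!d_C`, `m⁰`, `m²`, `w_C : C ⟶ 𝟙`, and `d_C : C ⟶ C ⊗ C` (the last one by commutativity
and coassociativity). Composing with `eps` gives `w_C` resp. `d_C` on both sides.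
-/

open CategoryTheory MonoidalCategory

universe v u

variable {L : Type u} [Category.{v} L] [MonoidalCategory L] [SymmetricCategory L]

/-- `(X, w, d)` is a commutative comonoid in the SMC `L`. -/
structure IsCComon {X : L} (w : X ⟶ 𝟙_ L) (d : X ⟶ X ⊗ X) : Prop where
  counit : d ≫ (w ▷ X) = (λ_ X).inv
  comm : d ≫ (β_ X X).hom = d
  coassoc : d ≫ (d ▷ X) ≫ (α_ X X X).hom = d ≫ (X ◁ d)

/-- The middle-swap (A ⊗ B) ⊗ (C ⊗ D) ⟶ (A ⊗ C) ⊗ (B ⊗ D). -/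
def midSwap (A B C D : L) : (A ⊗ B) ⊗ (C ⊗ D) ⟶ (A ⊗ C) ⊗ (B ⊗ D) :=
  (α_ A B (C ⊗ D)).hom ≫
    (A ◁ ((α_ B C D).inv ≫ ((β_ B C).hom ▷ D) ≫ (α_ C B D).hom)) ≫
    (α_ A C (B ⊗ D)).inv

/-- `f` is a comonoid morphism from `(X, wX, dX)` to `(Y, wY, dY)`. -/
def IsComonHom {X Y : L} (wX : X ⟶ 𝟙_ L) (dX : X ⟶ X ⊗ X)
    (wY : Y ⟶ 𝟙_ L) (dY : Y ⟶ Y ⊗ Y) (f : X ⟶ Y) : Prop :=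
  f ≫ wY = wX ∧ f ≫ dY = dX ≫ (f ⊗ₘ f)

/-- A Lafont exponential on an SMC: each object `X` has a cofree commutative
comonoid `(!X, w X, c X)` with counit-of-cofreeness `eps X : !X ⟶ X`:
every morphism from a commutative comonoid to `X` lifts uniquely to a
comonoid morphism into `!X`. -/
structure Lafont (L : Type u) [Category.{v} L] [MonoidalCategory L] [SymmetricCategory L] where
  bang : L → L
  eps : ∀ X : L, bang X ⟶ X
  w : ∀ X : L, bang X ⟶ 𝟙_ L
  c : ∀ X : L, bang X ⟶ bang X ⊗ bang X
  comon : ∀ X : L, IsCComon (w X) (c X)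
  cofree : ∀ {X C : L} (wC : C ⟶ 𝟙_ L) (dC : C ⟶ C ⊗ C), IsCComon wC dC →
    ∀ f : C ⟶ X, ∃! g : C ⟶ bang X,
      IsComonHom wC dC (w X) (c X) g ∧ g ≫ eps X = f

lemma midSwap_eq_tensorμ (A B C D : L) : midSwap A B C D = tensorμ A B C D := by
  simp [midSwap, tensorμ, MonoidalCategory.whiskerLeft_comp]

lemma midSwap_natural {A B C D A' B' C' D' : L} (f : A ⟶ A') (g : B ⟶ B')
    (p : C ⟶ C') (q : D ⟶ D') :
    ((f ⊗ₘ g) ⊗ₘ (p ⊗ₘ q)) ≫ midSwap A' B' C' D' =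
      midSwap A B C D ≫ ((f ⊗ₘ p) ⊗ₘ (g ⊗ₘ q)) := by
  rw [midSwap_eq_tensorμ, midSwap_eq_tensorμ]
  exact tensorμ_natural f g p q

-- The tensor product of the comonoids `(X, wX, dX)` and `(Y, wY, dY)`.
def tensorCounit {X Y : L} (wX : X ⟶ 𝟙_ L) (wY : Y ⟶ 𝟙_ L) : X ⊗ Y ⟶ 𝟙_ L :=
  (wX ⊗ₘ wY) ≫ (λ_ (𝟙_ L)).hom

def tensorComul {X Y : L} (dX : X ⟶ X ⊗ X) (dY : Y ⟶ Y ⊗ Y) : X ⊗ Y ⟶ (X ⊗ Y) ⊗ (X ⊗ Y) :=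
  (dX ⊗ₘ dY) ≫ midSwap X X Y Y

lemma IsComonHom.comp {M : Type*} [Category M] [MonoidalCategory M] {X Y Z : M}
    {wX : X ⟶ 𝟙_ M} {dX : X ⟶ X ⊗ X} {wY : Y ⟶ 𝟙_ M} {dY : Y ⟶ Y ⊗ Y} {wZ : Z ⟶ 𝟙_ M}
    {dZ : Z ⟶ Z ⊗ Z} {f : X ⟶ Y} {g : Y ⟶ Z} (hf : IsComonHom wX dX wY dY f)
    (hg : IsComonHom wY dY wZ dZ g) : IsComonHom wX dX wZ dZ (f ≫ g) := by
  constructor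
  · rw [Category.assoc, hg.1, hf.1]
  · rw [Category.assoc, hg.2, reassoc_of% hf.2, tensorHom_comp_tensorHom]

section IsComonHom

variable {X Y X' Y' : L} {wX : X ⟶ 𝟙_ L} {dX : X ⟶ X ⊗ X} {wY : Y ⟶ 𝟙_ L} {dY : Y ⟶ Y ⊗ Y}
  {wX' : X' ⟶ 𝟙_ L} {dX' : X' ⟶ X' ⊗ X'} {wY' : Y' ⟶ 𝟙_ L} {dY' : Y' ⟶ Y' ⊗ Y'}

lemma IsComonHom.tensor {f : X ⟶ X'} {g : Y ⟶ Y'} (hf : IsComonHom wX dX wX' dX' f)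
    (hg : IsComonHom wY dY wY' dY' g) :
    IsComonHom (tensorCounit wX wY) (tensorComul dX dY)
      (tensorCounit wX' wY') (tensorComul dX' dY') (f ⊗ₘ g) := by
  constructor
  · rw [tensorCounit, tensorCounit, reassoc_of% tensorHom_comp_tensorHom, hf.1, hg.1]
  · rw [tensorComul, tensorComul, reassoc_of% tensorHom_comp_tensorHom, hf.2, hg.2,
      ← tensorHom_comp_tensorHom, Category.assoc, Category.assoc, midSwap_natural]

end IsComonHom

namespace IsCComon

variable {X : L} {w : X ⟶ 𝟙_ L} {d : X ⟶ X ⊗ X}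

lemma comul_counit_tensor (h : IsCComon w d) : d ≫ (w ⊗ₘ w) = w ≫ (λ_ (𝟙_ L)).inv := by
  rw [MonoidalCategory.tensorHom_def, ← Category.assoc, h.counit]
  simp

/- Coassociativity rewrites `(d ⊗ d) ∘ d` as `X ◁ (d ▷ X) ∘ X ◁ d` up to associators; there the
middle swap acts as `β ▷ X` on the inner `d`, which it fixes by commutativity. -/
lemma comul_tensor_comul_midSwap (h : IsCComon w d) :
    d ≫ (d ⊗ₘ d) ≫ midSwap X X X X = d ≫ (d ⊗ₘ d) := by
  have coassoc' : d ≫ (X ◁ d) ≫ (α_ X X X).inv = d ≫ (d ▷ X) := by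
    rw [← Category.assoc, ← h.coassoc]
    simp
  have swap_inner : d ≫ (X ◁ d) ≫ (α_ X X X).inv ≫ ((β_ X X).hom ▷ X) ≫ (α_ X X X).hom =
      d ≫ (X ◁ d) := by
    slice_lhs 1 3 => rw [coassoc']
    slice_lhs 2 3 => rw [← comp_whiskerRight, h.comm]
    exact h.coassoc
  rw [midSwap, MonoidalCategory.tensorHom_def d d]
  simp only [MonoidalCategory.whiskerLeft_comp, Category.assoc]
  slice_lhs 3 4 => rw [associator_naturality_right]
  slice_lhs 1 3 => rw [h.coassoc]
  slice_lhs 2 6 =>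
    simp only [← MonoidalCategory.whiskerLeft_comp]
    rw [swap_inner, MonoidalCategory.whiskerLeft_comp]
  slice_lhs 3 4 => rw [associator_inv_naturality_right]
  slice_lhs 1 3 => rw [coassoc']
  rw [Category.assoc]

lemma isComonHom_counit (h : IsCComon w d) :
    IsComonHom w d (𝟙 (𝟙_ L)) (λ_ (𝟙_ L)).inv w :=
  ⟨Category.comp_id w, h.comul_counit_tensor.symm⟩

lemma isComonHom_comul (h : IsCComon w d) :
    IsComonHom w d (tensorCounit w w) (tensorComul d d) d := by
  constructor
  · rw [tensorCounit, reassoc_of% h.comul_counit_tensor, Iso.inv_hom_id, Category.comp_id]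
  · rw [tensorComul, h.comul_tensor_comul_midSwap]

end IsCComon

lemma Lafont.hom_ext (E : Lafont L) {X C : L} {wC : C ⟶ 𝟙_ L} {dC : C ⟶ C ⊗ C}
    (hC : IsCComon wC dC) {g₁ g₂ : C ⟶ E.bang X}
    (h₁ : IsComonHom wC dC (E.w X) (E.c X) g₁) (h₂ : IsComonHom wC dC (E.w X) (E.c X) g₂)
    (heps : g₁ ≫ E.eps X = g₂ ≫ E.eps X) : g₁ = g₂ :=
  (E.cofree wC dC hC (g₂ ≫ E.eps X)).unique ⟨h₁, heps⟩ ⟨h₂, rfl⟩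

/-- In a Lafont SMC, for a commutative comonoid `C` with canonical coalgebra
structure `δ`, the counit and comultiplication are coalgebra morphisms:
`!w_C ∘ δ = m⁰ ∘ w_C` and `!d_C ∘ δ = m² ∘ (δ⊗δ) ∘ d_C`, where `m⁰, m²`
(the lax monoidality of `!`) and `!w_C`, `!d_C` are given by their
characterizations as comonoid morphisms. -/
theorem stmt16 (E : Lafont L) (C : L) (wC : C ⟶ 𝟙_ L) (dC : C ⟶ C ⊗ C)
    (h : IsCComon wC dC) (δ : C ⟶ E.bang C)
    (hδ : δ ≫ E.eps C = 𝟙 C ∧ δ ≫ E.w C = wC ∧ δ ≫ E.c C = dC ≫ (δ ⊗ₘ δ))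
    (m0 : 𝟙_ L ⟶ E.bang (𝟙_ L))
    (hm0 : m0 ≫ E.eps (𝟙_ L) = 𝟙 (𝟙_ L) ∧ m0 ≫ E.w (𝟙_ L) = 𝟙 (𝟙_ L) ∧
      m0 ≫ E.c (𝟙_ L) = (λ_ (𝟙_ L)).inv ≫ (m0 ⊗ₘ m0))
    (m2 : E.bang C ⊗ E.bang C ⟶ E.bang (C ⊗ C))
    (hm2 : m2 ≫ E.eps (C ⊗ C) = E.eps C ⊗ₘ E.eps C ∧
      m2 ≫ E.w (C ⊗ C) = (E.w C ⊗ₘ E.w C) ≫ (λ_ (𝟙_ L)).hom ∧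
      m2 ≫ E.c (C ⊗ C) =
        ((E.c C ⊗ₘ E.c C) ≫ midSwap (E.bang C) (E.bang C) (E.bang C) (E.bang C)) ≫
          (m2 ⊗ₘ m2))
    (bw : E.bang C ⟶ E.bang (𝟙_ L))
    (hbw : bw ≫ E.eps (𝟙_ L) = E.eps C ≫ wC ∧ bw ≫ E.w (𝟙_ L) = E.w C ∧
      bw ≫ E.c (𝟙_ L) = E.c C ≫ (bw ⊗ₘ bw))
    (bd : E.bang C ⟶ E.bang (C ⊗ C))
    (hbd : bd ≫ E.eps (C ⊗ C) = E.eps C ≫ dC ∧ bd ≫ E.w (C ⊗ C) = E.w C ∧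
      bd ≫ E.c (C ⊗ C) = E.c C ≫ (bd ⊗ₘ bd)) :
    δ ≫ bw = wC ≫ m0 ∧ δ ≫ bd = dC ≫ (δ ⊗ₘ δ) ≫ m2 := by
  obtain ⟨hδe, hδw, hδc⟩ := hδ
  obtain ⟨hm0e, hm0w, hm0c⟩ := hm0
  obtain ⟨hm2e, hm2w, hm2c⟩ := hm2
  obtain ⟨hbwe, hbww, hbwc⟩ := hbw
  obtain ⟨hbde, hbdw, hbdc⟩ := hbd
  have hδ_hom : IsComonHom wC dC (E.w C) (E.c C) δ := ⟨hδw, hδc⟩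
  constructor
  · apply E.hom_ext h (hδ_hom.comp ⟨hbww, hbwc⟩)
      (h.isComonHom_counit.comp ⟨hm0w, hm0c⟩)
    simp [hbwe, reassoc_of% hδe, hm0e]
  · apply E.hom_ext h (hδ_hom.comp ⟨hbdw, hbdc⟩)
      (h.isComonHom_comul.comp ((hδ_hom.tensor hδ_hom).comp ⟨hm2w, hm2c⟩))
    simp [hbde, reassoc_of% hδe, hm2e, tensorHom_comp_tensorHom, hδe]
end
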